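/- arXiv:1204.2802 — 2 statements merged into one kernel-verified Lean document; each statement's English description precedes it below -/
import Mathlib

section
/- Let M be a smooth manifold, G a Lie group acting smoothly on M (i.e. the map G × M → M, (s,p) ↦ s • p, is smooth), and f : M → ℝ a smooth function. Define F : M × G → ℝ by F(p,s) = f(s • p). Then for every (p,s) ∈ M × G, the differential of F vanishes at (p,s) if and only if the differential of f vanishes at s • p; equivalently, the critical set of F is exactly {(p,s) ∈ M × G : s • p is a critical point of f}. -/
open Manifold

/-! The map `φ (p, s) = s • p` has, through every point `(p, s)`, the right inverse
`y ↦ (s⁻¹ • y, s)`. A map with a differentiable right inverse through `x` has surjective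
differential at `x`, so by the chain rule `d(f ∘ φ)` vanishes at `x` exactly when `df`
vanishes at `φ x`. -/

section RightInverse

variable {𝕜 : Type*} [NontriviallyNormedField 𝕜]
  {E : Type*} [NormedAddCommGroup E] [NormedSpace 𝕜 E]
  {H : Type*} [TopologicalSpace H] {I : ModelWithCorners 𝕜 E H}
  {M : Type*} [TopologicalSpace M] [ChartedSpace H M]
  {E' : Type*} [NormedAddCommGroup E'] [NormedSpace 𝕜 E']
  {H' : Type*} [TopologicalSpace H'] {I' : ModelWithCorners 𝕜 E' H'}
  {N : Type*} [TopologicalSpace N] [ChartedSpace H' N]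
  {F : Type*} [NormedAddCommGroup F] [NormedSpace 𝕜 F]
  {K : Type*} [TopologicalSpace K] {J : ModelWithCorners 𝕜 F K}
  {P : Type*} [TopologicalSpace P] [ChartedSpace K P]

theorem mfderiv_comp_eq_zero_of_mfderiv_eq_zero {f : M → P} {φ : N → M} {x : N}
    (hf : MDifferentiableAt I J f (φ x)) (hφ : MDifferentiableAt I' I φ x)
    (h : mfderiv I J f (φ x) = 0) : mfderiv I' J (f ∘ φ) x = 0 := by
  rw [mfderiv_comp x hf hφ, h, ContinuousLinearMap.zero_comp]

theorem mfderiv_comp_eq_zero_iff_of_rightInverse {f : M → P} {φ : N → M} {ψ : M → N} {x : N}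
    (hφψ : Function.RightInverse ψ φ) (hψφ : ψ (φ x) = x)
    (hf : MDifferentiableAt I J f (φ x)) (hφ : MDifferentiableAt I' I φ x)
    (hψ : MDifferentiableAt I I' ψ (φ x)) :
    mfderiv I' J (f ∘ φ) x = 0 ↔ mfderiv I J f (φ x) = 0 := by
  refine ⟨fun h => ?_, mfderiv_comp_eq_zero_of_mfderiv_eq_zero hf hφ⟩
  have hfφ : MDifferentiableAt I' J (f ∘ φ) (ψ (φ x)) := by
    rw [hψφ]; exact hf.comp x hφ
  have hfactor : f = (f ∘ φ) ∘ ψ := funext fun y => congrArg f (hφψ y).symm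
  rw [hfactor]
  exact mfderiv_comp_eq_zero_of_mfderiv_eq_zero hfφ hψ (by rwa [hψφ])

end RightInverse

theorem stmt_0_general
    {E : Type*} [NormedAddCommGroup E] [NormedSpace ℝ E]
    {H : Type*} [TopologicalSpace H] (I : ModelWithCorners ℝ E H)
    {M : Type*} [TopologicalSpace M] [ChartedSpace H M]
    {E' : Type*} [NormedAddCommGroup E'] [NormedSpace ℝ E']
    {H' : Type*} [TopologicalSpace H'] (I' : ModelWithCorners ℝ E' H')
    {G : Type*} [TopologicalSpace G] [ChartedSpace H' G] [Group G]
    [MulAction G M]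
    (hact : ContMDiff (I'.prod I) I (⊤ : ℕ∞) (fun q : G × M => q.1 • q.2))
    (f : M → ℝ) (hf : ContMDiff I 𝓘(ℝ, ℝ) (⊤ : ℕ∞) f) :
    ∀ (p : M) (s : G),
      mfderiv (I.prod I') 𝓘(ℝ, ℝ) (fun q : M × G => f (q.2 • q.1)) (p, s) = 0 ↔
        mfderiv I 𝓘(ℝ, ℝ) f (s • p) = 0 := by
  intro p s
  have hφ : ContMDiff (I.prod I') I (⊤ : ℕ∞) (fun q : M × G => q.2 • q.1) :=
    hact.comp (contMDiff_snd.prodMk contMDiff_fst)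
  have hψ : ContMDiff I (I.prod I') (⊤ : ℕ∞) (fun y : M => (s⁻¹ • y, s)) :=
    (hact.comp (contMDiff_const.prodMk contMDiff_id)).prodMk contMDiff_const
  exact mfderiv_comp_eq_zero_iff_of_rightInverse (fun y => smul_inv_smul s y)
    (by simp) (hf.mdifferentiableAt (by simp)) (hφ.mdifferentiableAt (by simp))
    (hψ.mdifferentiableAt (by simp))

/-- The critical set of the twisted function `F(p,s) = f(s • p)` on `M × G`:
`dF` vanishes at `(p,s)` iff `df` vanishes at `s • p`. -/
theorem stmt_0
    {E : Type*} [NormedAddCommGroup E] [NormedSpace ℝ E]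
    {H : Type*} [TopologicalSpace H] (I : ModelWithCorners ℝ E H)
    {M : Type*} [TopologicalSpace M] [ChartedSpace H M] [IsManifold I (⊤ : ℕ∞) M]
    {E' : Type*} [NormedAddCommGroup E'] [NormedSpace ℝ E']
    {H' : Type*} [TopologicalSpace H'] (I' : ModelWithCorners ℝ E' H')
    {G : Type*} [TopologicalSpace G] [ChartedSpace H' G] [Group G] [LieGroup I' (⊤ : ℕ∞) G]
    [MulAction G M]
    (hact : ContMDiff (I'.prod I) I (⊤ : ℕ∞) (fun q : G × M => q.1 • q.2))
    (f : M → ℝ) (hf : ContMDiff I 𝓘(ℝ, ℝ) (⊤ : ℕ∞) f) :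
    ∀ (p : M) (s : G),
      mfderiv (I.prod I') 𝓘(ℝ, ℝ) (fun q : M × G => f (q.2 • q.1)) (p, s) = 0 ↔
        mfderiv I 𝓘(ℝ, ℝ) f (s • p) = 0 :=
  stmt_0_general I I' hact f hf
end

section
/- Let E be a real Hilbert space, f : E → ℝ a continuously differentiable function, and u : ℝ → E a differentiable curve satisfying u'(t) = gradient f (u(t)) for all t ∈ ℝ. If u(t) converges to a point x ∈ E as t → +∞, then gradient f x = 0, i.e. the limit x is a critical point of f. -/
/-!
Along a gradient flow line, `f ∘ u` has derivative `‖∇f(u t)‖²`. As `t → ∞` this derivative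
tends to `‖∇f(x)‖²` by continuity of `∇f`, while `f ∘ u` itself converges to `f x`. A real
function with a limit at infinity whose derivative also has a limit there must have derivative
limit `0`, since by the mean value theorem `g (t + 1) - g t = g' ξₜ` with `ξₜ ≥ t`.
-/

open Filter Topology InnerProductSpace

theorem eq_zero_of_tendsto_of_tendsto_hasDerivAt {g g' : ℝ → ℝ} {a b : ℝ}
    (hg : ∀ t, HasDerivAt g (g' t) t) (ha : Tendsto g atTop (𝓝 a))
    (hb : Tendsto g' atTop (𝓝 b)) : b = 0 := by
  have hmvt : ∀ t, ∃ ξ ∈ Set.Ioo t (t + 1), g' ξ = (g (t + 1) - g t) / (t + 1 - t) :=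
    fun t ↦ exists_hasDerivAt_eq_slope g g' (lt_add_one t)
      (fun s _ ↦ (hg s).continuousAt.continuousWithinAt) (fun s _ ↦ hg s)
  choose ξ hξ hξ_slope using hmvt
  have hξ_top : Tendsto ξ atTop atTop :=
    tendsto_atTop_mono (fun t ↦ (hξ t).1.le) tendsto_id
  have hslope : Tendsto (fun t ↦ g' (ξ t)) atTop (𝓝 (a - a)) := by
    simp only [hξ_slope, add_sub_cancel_left, div_one]
    exact (ha.comp (tendsto_atTop_add_const_right _ 1 tendsto_id)).sub ha
  rw [sub_self] at hslope
  exact tendsto_nhds_unique (hb.comp hξ_top) hslope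

section Gradient

variable {E : Type*} [NormedAddCommGroup E] [InnerProductSpace ℝ E] [CompleteSpace E]

theorem HasGradientAt.comp_hasDerivAt {f : E → ℝ} {u : ℝ → E} {f' v : E} {t : ℝ}
    (hf : HasGradientAt f f' (u t)) (hu : HasDerivAt u v t) :
    HasDerivAt (f ∘ u) ⟪f', v⟫_ℝ t := by
  simpa using (hasGradientAt_iff_hasFDerivAt.mp hf).comp_hasDerivAt t hu

theorem ContDiff.continuous_gradient {f : E → ℝ} {n : WithTop ℕ∞} (hf : ContDiff ℝ n f)
    (hn : n ≠ 0) : Continuous (gradient f) := by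
  have h : gradient f = (toDual ℝ E).symm ∘ fderiv ℝ f := by
    rw [← toDual_comp_gradient, ← Function.comp_assoc, (toDual ℝ E).symm_comp_self,
      Function.id_comp]
  rw [h]
  exact (toDual ℝ E).symm.continuous.comp (hf.continuous_fderiv hn)

end Gradient

/-- The asymptotic limit as `t → +∞` of a gradient flow line `u' = ∇f(u)` of a
continuously differentiable function `f` is a critical point of `f`. -/
theorem stmt_14 {E : Type*}
    [NormedAddCommGroup E] [InnerProductSpace ℝ E] [CompleteSpace E]
    (f : E → ℝ) (hf : ContDiff ℝ 1 f)
    (u : ℝ → E) (hu : ∀ t : ℝ, HasDerivAt u (gradient f (u t)) t)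
    (x : E) (hx : Filter.Tendsto u Filter.atTop (nhds x)) :
    gradient f x = 0 := by
  have hflow : ∀ t, HasDerivAt (f ∘ u) (‖gradient f (u t)‖ ^ 2) t := fun t ↦ by
    simpa [real_inner_self_eq_norm_sq] using
      ((hf.differentiable one_ne_zero).differentiableAt.hasGradientAt).comp_hasDerivAt (hu t)
  have hgrad : Continuous (gradient f) := hf.continuous_gradient one_ne_zero
  have hnorm_sq : ‖gradient f x‖ ^ 2 = 0 :=
    eq_zero_of_tendsto_of_tendsto_hasDerivAt hflow (hf.continuous.tendsto x |>.comp hx)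
      ((hgrad.norm.pow 2).tendsto x |>.comp hx)
  simpa using hnorm_sq
end
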